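/- arXiv:2109.02057 — 4 statements merged into one kernel-verified Lean document; each statement's English description precedes it below -/
import Mathlib

section
/- For linear maps φ : ℚ[z_J] → ℚ[z_K] and ψ : ℚ[z_K] → ℚ[z_L] between polynomial rings, the generating function of the composition ψ ∘ φ is obtained by contraction: G(ψ ∘ φ) = (G(φ)|_{z_K ↦ ∂_{ζ_K}} · G(ψ))|_{ζ_K = 0}. -/
/-!
Both sides are linear in the coefficients of `φ (z_J^n)`, so it suffices to expand
`φ (z_J^n) = Σ_m c_m z_K^m` in monomials: contraction pairs `z_K^m` with the coefficient
`ψ (z_K^m) / m!` of `G(ψ)`, and the factor `m!` it carries cancels that denominator,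
leaving `Σ_m c_m ψ (z_K^m) = ψ (φ (z_J^n))`.
-/

noncomputable section

/-- The multi-index factorial `n! = ∏_j (n_j)!`. -/
def mfact {J : Type*} (n : J →₀ ℕ) : ℕ := n.prod fun _ k => k.factorial

/-- The exponential generating function of a linear map `φ : ℚ[z_J] → ℚ[z_K]`:
the coefficient of `ζ_J^n` in `G(φ)` is `φ(z_J^n)/n!`. -/
def genFun {J K : Type*} (φ : MvPolynomial J ℚ →ₗ[ℚ] MvPolynomial K ℚ) :
    MvPowerSeries J (MvPolynomial K ℚ) :=
  fun n => ((mfact n : ℚ)⁻¹) • φ (MvPolynomial.monomial n 1)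

/-- Contraction of generating functions: for `f ∈ ℚ[z_K][[ζ_J]]` and
`g ∈ ℚ[z_L][[ζ_K]]`, the element `(f|_{z_K ↦ ∂_{ζ_K}} · g)|_{ζ_K = 0}` of
`ℚ[z_L][[ζ_J]]`.  Its coefficient at `ζ_J^n` is
`Σ_m m! · (coeff of z_K^m in the ζ_J^n-coefficient of f) · (coeff of ζ_K^m in g)`,
where the (finite) sum runs over the support of the polynomial coefficient. -/
def contractGF {J K L : Type*} (f : MvPowerSeries J (MvPolynomial K ℚ))
    (g : MvPowerSeries K (MvPolynomial L ℚ)) :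
    MvPowerSeries J (MvPolynomial L ℚ) :=
  fun n => ∑ m ∈ (MvPowerSeries.coeff n f).support,
    ((mfact m : ℚ) *
        MvPolynomial.coeff m (MvPowerSeries.coeff n f)) •
      MvPowerSeries.coeff m g

open MvPolynomial

lemma mfact_cast_ne_zero {J : Type*} (n : J →₀ ℕ) : (mfact n : ℚ) ≠ 0 :=
  Nat.cast_ne_zero.mpr <| Finset.prod_ne_zero_iff.mpr fun _ _ => Nat.factorial_ne_zero _

lemma coeff_genFun {J K : Type*} (φ : MvPolynomial J ℚ →ₗ[ℚ] MvPolynomial K ℚ)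
    (n : J →₀ ℕ) :
    MvPowerSeries.coeff n (genFun φ) = (mfact n : ℚ)⁻¹ • φ (monomial n 1) :=
  rfl

lemma mfact_smul_coeff_genFun {J K : Type*} (φ : MvPolynomial J ℚ →ₗ[ℚ] MvPolynomial K ℚ)
    (n : J →₀ ℕ) :
    (mfact n : ℚ) • MvPowerSeries.coeff n (genFun φ) = φ (monomial n 1) := by
  rw [coeff_genFun, smul_smul, mul_inv_cancel₀ (mfact_cast_ne_zero n), one_smul]

lemma LinearMap.sum_coeff_smul_map_monomial {σ R M : Type*} [CommSemiring R]
    [AddCommMonoid M] [Module R M] (ψ : MvPolynomial σ R →ₗ[R] M) (p : MvPolynomial σ R) :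
    ∑ m ∈ p.support, coeff m p • ψ (monomial m 1) = ψ p := by
  conv_rhs => rw [p.as_sum]
  simp only [map_sum, ← map_smul, smul_eq_mul, mul_one]

lemma coeff_contractGF {J K L : Type*} (f : MvPowerSeries J (MvPolynomial K ℚ))
    (g : MvPowerSeries K (MvPolynomial L ℚ)) (n : J →₀ ℕ) :
    MvPowerSeries.coeff n (contractGF f g) =
      ∑ m ∈ (MvPowerSeries.coeff n f).support,
        coeff m (MvPowerSeries.coeff n f) • (mfact m : ℚ) • MvPowerSeries.coeff m g := by
  refine Finset.sum_congr rfl fun m _ => ?_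
  rw [smul_smul, mul_comm]

theorem genFun_comp_general (J K L : Type*)
    (φ : MvPolynomial J ℚ →ₗ[ℚ] MvPolynomial K ℚ)
    (ψ : MvPolynomial K ℚ →ₗ[ℚ] MvPolynomial L ℚ) :
    genFun (ψ ∘ₗ φ) = contractGF (genFun φ) (genFun ψ) := by
  ext1 n
  set P := φ (monomial n 1)
  have hsupport : (MvPowerSeries.coeff n (genFun φ)).support = P.support :=
    support_smul_eq (inv_ne_zero (mfact_cast_ne_zero n)) P
  calc MvPowerSeries.coeff n (genFun (ψ ∘ₗ φ))
      = (mfact n : ℚ)⁻¹ • ∑ m ∈ P.support, coeff m P • ψ (monomial m 1) := by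
        rw [ψ.sum_coeff_smul_map_monomial]; rfl
    _ = MvPowerSeries.coeff n (contractGF (genFun φ) (genFun ψ)) := by
        rw [coeff_contractGF, hsupport, Finset.smul_sum]
        refine Finset.sum_congr rfl fun m _ => ?_
        rw [mfact_smul_coeff_genFun, coeff_genFun, coeff_smul, smul_eq_mul, mul_smul]

/-- For linear maps `φ : ℚ[z_J] → ℚ[z_K]` and `ψ : ℚ[z_K] → ℚ[z_L]`,
the generating function of the composition is the contraction of the
generating functions: `G(ψ ∘ φ) = (G(φ)|_{z_K ↦ ∂_{ζ_K}} · G(ψ))|_{ζ_K = 0}`. -/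
theorem genFun_comp (J K L : Type*) [Finite J] [Finite K] [Finite L]
    (φ : MvPolynomial J ℚ →ₗ[ℚ] MvPolynomial K ℚ)
    (ψ : MvPolynomial K ℚ →ₗ[ℚ] MvPolynomial L ℚ) :
    genFun (ψ ∘ₗ φ) = contractGF (genFun φ) (genFun ψ) :=
  genFun_comp_general J K L φ ψ
end
end

section
/- The universal Heisenberg-algebra invariant of the positive trefoil equals the reciprocal of its Alexander polynomial: for the long positive trefoil diagram T (closure of the 2-strand braid with 3 positive crossings), Z̃(T) = 1/(1 - T + T²), computed as the contraction ⟨e^{(T-1)(p_i - p_j)(-T x_i + (1+T²) x_j)} · e^{(π_i+π_j)p_0 + (ξ_i+ξ_j)x_0 - ξ_i π_j}⟩ over the pairs indexed by i and j. -/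
noncomputable section

/-- The scalar ring `K = ℚ[[t]]`. -/
abbrev Kt : Type := PowerSeries ℚ

/-- `T = e^{-t} ∈ ℚ[[t]]`. -/
def Tser : Kt := PowerSeries.mk fun n => ((-1 : ℚ)) ^ n * ((n.factorial : ℚ))⁻¹

/-- `T⁻¹ = e^{t} ∈ ℚ[[t]]`. -/
def TserInv : Kt := PowerSeries.mk fun n => ((n.factorial : ℚ))⁻¹

/-- Variables: contracted Latin variables `p_1, x_1, p_2, x_2` (first summand,
`(strand, false) = p`, `(strand, true) = x`), Greek variables `π_1, ξ_1, π_2, ξ_2`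
(second summand), and output Latin variables `p_0, x_0` (third summand). -/
abbrev VAll : Type := (Fin 2 × Bool) ⊕ (Fin 2 × Bool) ⊕ Bool

/-- The ambient ring for the contraction computation. -/
abbrev SAll : Type := MvPowerSeries VAll Kt

/-- The exponential `e^E = Σ_k E^k / k!` of an element with zero constant term,
computed coefficientwise. -/
def expK {σ : Type*} (E : MvPowerSeries σ Kt) : MvPowerSeries σ Kt :=
  fun m => ∑ k ∈ Finset.range (m.sum (fun _ e => e) + 1),
    ((k.factorial : ℚ)⁻¹) • MvPowerSeries.coeff (R := Kt) m (E ^ k)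

/-- The contraction slice: the coefficient of (Latin)`^k`·(Greek)`^k` in `h`, as a
power series in the output variables `p_0, x_0`. -/
def sliceC (k : (Fin 2 × Bool) →₀ ℕ) (h : SAll) : MvPowerSeries Bool Kt :=
  fun u => MvPowerSeries.coeff (R := Kt)
    (k.mapDomain Sum.inl + k.mapDomain (fun v => Sum.inr (Sum.inl v)) +
      u.mapDomain (fun w => Sum.inr (Sum.inr w))) h

/-- The `t`-adic (coefficientwise) topology on `ℚ[[t]]`. -/
def KtTop : TopologicalSpace Kt :=
  @Pi.topologicalSpace (Unit →₀ ℕ) (fun _ => ℚ) (fun _ => ⊥)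

/-- The coefficientwise topology on the output ring. -/
def outTop : TopologicalSpace (MvPowerSeries Bool Kt) :=
  @Pi.topologicalSpace (Bool →₀ ℕ) (fun _ => Kt) (fun _ => KtTop)

/-- The exponent
`(T-1)(p_i-p_j)(-T x_i + (1+T²) x_j) + (π_i+π_j)p_0 + (ξ_i+ξ_j)x_0 - ξ_iπ_j`
(with `i = 0`, `j = 1`), whose exponential is the value of the 2-strand braid with
three positive crossings multiplied by the closing merge `m^{ij}_0`. -/
def E9 : SAll :=
  MvPowerSeries.C (σ := VAll) (R := Kt) (Tser - 1) *
      (MvPowerSeries.X (Sum.inl (0, false)) - MvPowerSeries.X (Sum.inl (1, false))) *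
      (MvPowerSeries.C (σ := VAll) (R := Kt) (-Tser) * MvPowerSeries.X (Sum.inl (0, true)) +
        MvPowerSeries.C (σ := VAll) (R := Kt) (1 + Tser ^ 2) * MvPowerSeries.X (Sum.inl (1, true))) +
    (MvPowerSeries.X (Sum.inr (Sum.inl (0, false))) +
        MvPowerSeries.X (Sum.inr (Sum.inl (1, false)))) *
      MvPowerSeries.X (Sum.inr (Sum.inr false)) +
    (MvPowerSeries.X (Sum.inr (Sum.inl (0, true))) +
        MvPowerSeries.X (Sum.inr (Sum.inl (1, true)))) *
      MvPowerSeries.X (Sum.inr (Sum.inr true)) -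
    MvPowerSeries.X (Sum.inr (Sum.inl (0, true))) *
      MvPowerSeries.X (Sum.inr (Sum.inl (1, false)))

/-!
The exponent `E9` is a sum of four pieces, each a product of linear forms, so `E9 ^ κ` expands
into explicit monomials indexed by binomial indices; a term with nonzero coefficient is determined
by its exponent, so at the monomial read off by `sliceC k` at most one term survives. Writing `k = (a, b, c, d)` for the
exponents of `p₁, x₁, p₂, x₂` and `u = (u₀, u₁)`, the summand `k! • sliceC k (e^{E9})` at `u`
vanishes unless `u₀ = u₁ = e`, `a + c = b + d`, `a ≤ e` and `d ≤ e ≤ a + c`, and then equals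
`(-1)^a C(e, a)` times a weight in `(e, b, d)` divisible by `(T - 1)^(b + d)`. Summing over `a`
first, the alternating binomial sum kills every `u` with `e > 0`; for `u = 0` only
`k = (0, b, b, 0)` survives, contributing `(T - T²)^b`, and the geometric series sums to
`1 / (1 - T + T²)`. Everything converges coefficientwise because `T - 1` has no constant term.
-/

theorem add_pow_eq_sum_range {S : Type*} [CommSemiring S] (x y : S) {n N : ℕ} (h : n ≤ N) :
    (x + y) ^ n = ∑ j ∈ Finset.range (N + 1), x ^ j * y ^ (n - j) * n.choose j := by
  rw [add_pow]
  refine Finset.sum_subset (Finset.range_subset_range.2 (by omega)) fun j _ hj => ?_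
  rw [Nat.choose_eq_zero_of_lt (by simpa using hj), Nat.cast_zero, mul_zero]

theorem sum_range_neg_one_pow_mul_choose {S : Type*} [Ring S] (n : ℕ) :
    ∑ j ∈ Finset.range (n + 1), ((-1) ^ j * n.choose j : S) = if n = 0 then 1 else 0 := by
  have h := congrArg (Int.cast : ℤ → S) (Int.alternating_sum_range_choose (n := n))
  push_cast at h
  exact h

theorem neg_one_pow_mul_neg_one_pow_eq {S : Type*} [Ring S] {m n m' n' : ℕ}
    (h : (m + n) % 2 = (m' + n') % 2) : (-1 : S) ^ m * (-1) ^ n = (-1) ^ m' * (-1) ^ n' := by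
  rw [← pow_add, ← pow_add, neg_one_pow_eq_pow_mod_two, h, ← neg_one_pow_eq_pow_mod_two]

namespace MvPowerSeries

open _root_.Finset
open Finsupp (single)

variable {σ R : Type*} [CommSemiring R]

theorem C_mul_monomial (a r : R) (d : σ →₀ ℕ) : C a * monomial d r = monomial d (a * r) := by
  rw [← monomial_zero_eq_C_apply, monomial_mul_monomial, zero_add]

theorem monomial_mul_natCast (d : σ →₀ ℕ) (r : R) (n : ℕ) :
    monomial d r * (n : MvPowerSeries σ R) = monomial d (r * n) := by
  rw [← map_natCast (C (σ := σ)), ← monomial_zero_eq_C_apply, monomial_mul_monomial, add_zero]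

theorem C_mul_X_add_C_mul_X_pow (α β : R) (v w : σ) {n N : ℕ} (h : n ≤ N) :
    (C α * X v + C β * X w) ^ n = ∑ j ∈ range (N + 1),
      monomial (single v j + single w (n - j)) (α ^ j * β ^ (n - j) * n.choose j) := by
  rw [add_pow_eq_sum_range _ _ h]
  refine sum_congr rfl fun j _ => ?_
  rw [mul_pow, mul_pow, ← map_pow, ← map_pow, X_pow_eq, X_pow_eq, C_mul_monomial, C_mul_monomial,
    monomial_mul_monomial, monomial_mul_natCast, mul_one, mul_one]

theorem X_add_X_mul_X_pow (v w z : σ) {n N : ℕ} (h : n ≤ N) :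
    ((X v + X w) * X z : MvPowerSeries σ R) ^ n = ∑ j ∈ range (N + 1),
      monomial (single v j + single w (n - j) + single z n) (n.choose j : R) := by
  have hC : (X v + X w : MvPowerSeries σ R) = C 1 * X v + C 1 * X w := by
    rw [map_one, one_mul, one_mul]
  rw [mul_pow, hC, C_mul_X_add_C_mul_X_pow _ _ _ _ h, X_pow_eq, sum_mul]
  refine sum_congr rfl fun j _ => ?_
  rw [monomial_mul_monomial, one_pow, one_pow, one_mul, one_mul, mul_one]

end MvPowerSeries

theorem coeff_expK {σ : Type*} (E : MvPowerSeries σ Kt) (m : σ →₀ ℕ) :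
    MvPowerSeries.coeff m (expK E) = ∑ κ ∈ Finset.range (m.sum (fun _ e => e) + 1),
      (κ.factorial : ℚ)⁻¹ • MvPowerSeries.coeff m (E ^ κ) := rfl

theorem HasSum.mul_of_finite_support_left {R ι κ : Type*} [Semiring R] [TopologicalSpace R]
    [IsTopologicalSemiring R] {c : κ → R} {g : ι → R} {S : R} (s : Finset κ)
    (hc : ∀ a ∉ s, c a = 0) (hg : HasSum g S) :
    HasSum (fun p : κ × ι => c p.1 * g p.2) ((∑ a ∈ s, c a) * S) := by
  classical
  have hsplit : (fun p : κ × ι => c p.1 * g p.2) =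
      fun p => ∑ a ∈ s, if p.1 = a then c a * g p.2 else 0 := by
    funext ⟨a, y⟩
    rw [Finset.sum_ite_eq]
    split_ifs with ha
    · rfl
    · rw [hc a ha, zero_mul]
  rw [hsplit, Finset.sum_mul]
  refine hasSum_sum fun a _ => ?_
  have hinj : Function.Injective fun y : ι => (a, y) := fun _ _ h => (Prod.mk.inj h).2
  refine (hinj.hasSum_iff fun p hp => if_neg fun ha => hp ⟨p.2, by rw [← ha]⟩).mp ?_
  simpa [Function.comp_def] using hg.mul_left (c a)

namespace PowerSeries.WithPiTopology

open scoped PowerSeries.WithPiTopology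

theorem summable_of_X_pow_dvd {R ι : Type*} [TopologicalSpace R] [Semiring R] {f : ι → R⟦X⟧}
    (w : ι → ℕ) (hw : ∀ N, {i | w i ≤ N}.Finite) (hf : ∀ i, X ^ w i ∣ f i) : Summable f := by
  rw [summable_iff_summable_coeff]
  refine fun N => summable_of_hasFiniteSupport ((hw N).subset fun i hi => ?_)
  by_contra hlt
  exact hi (X_pow_dvd_iff.mp (hf i) N (not_le.mp hlt))

theorem hasSum_pow_of_constantCoeff_eq_zero {k : Type*} [Field k] [TopologicalSpace k]
    [IsTopologicalRing k] [T2Space k] {q : k⟦X⟧} (hq : constantCoeff q = 0) :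
    HasSum (q ^ ·) (1 - q)⁻¹ := by
  convert (summable_pow_of_constantCoeff_eq_zero hq).hasSum
  rw [inv_eq_iff_mul_eq_one (by simp [hq])]
  exact tsum_pow_mul_one_sub_of_constantCoeff_eq_zero hq

end PowerSeries.WithPiTopology

namespace Trefoil

open MvPowerSeries Finset
open Finsupp (single)

instance : CharZero Kt := charZero_of_injective_algebraMap (algebraMap ℚ Kt).injective

abbrev p₁ : VAll := Sum.inl (0, false)
abbrev x₁ : VAll := Sum.inl (0, true)
abbrev p₂ : VAll := Sum.inl (1, false)
abbrev x₂ : VAll := Sum.inl (1, true)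
abbrev π₁ : VAll := Sum.inr (Sum.inl (0, false))
abbrev ξ₁ : VAll := Sum.inr (Sum.inl (0, true))
abbrev π₂ : VAll := Sum.inr (Sum.inl (1, false))
abbrev ξ₂ : VAll := Sum.inr (Sum.inl (1, true))
abbrev p₀ : VAll := Sum.inr (Sum.inr false)
abbrev x₀ : VAll := Sum.inr (Sum.inr true)

def braid : SAll := C (Tser - 1) * (X p₁ - X p₂) * (C (-Tser) * X x₁ + C (1 + Tser ^ 2) * X x₂)

def mergeP : SAll := (X π₁ + X π₂) * X p₀

def mergeX : SAll := (X ξ₁ + X ξ₂) * X x₀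

def cross : SAll := X ξ₁ * X π₂

theorem E9_eq : E9 = braid + mergeP + mergeX + -cross := by
  rw [← sub_eq_add_neg]
  rfl

theorem braid_pow {i N : ℕ} (h : i ≤ N) :
    braid ^ i = ∑ a ∈ range (N + 1), ∑ b ∈ range (N + 1),
      monomial (single p₁ a + single p₂ (i - a) + (single x₁ b + single x₂ (i - b)))
        ((Tser - 1) ^ i * ((-1) ^ (i - a) * i.choose a) *
          ((-Tser) ^ b * (1 + Tser ^ 2) ^ (i - b) * i.choose b)) := by
  have hp : (X p₁ - X p₂ : SAll) = C 1 * X p₁ + C (-1) * X p₂ := by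
    rw [map_one, map_neg, map_one, one_mul, neg_one_mul, sub_eq_add_neg]
  rw [braid, mul_pow, mul_pow, hp, C_mul_X_add_C_mul_X_pow _ _ _ _ h,
    C_mul_X_add_C_mul_X_pow _ _ _ _ h, ← map_pow, mul_assoc, sum_mul_sum, mul_sum]
  refine sum_congr rfl fun a _ => ?_
  rw [mul_sum]
  refine sum_congr rfl fun b _ => ?_
  rw [monomial_mul_monomial, C_mul_monomial, one_pow, one_mul]
  congr 1
  ring

theorem neg_cross_pow (r : ℕ) :
    (-cross) ^ r = monomial (single ξ₁ r + single π₂ r) ((-1) ^ r) := by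
  rw [cross, neg_pow, mul_pow, X_pow_eq, X_pow_eq, monomial_mul_monomial,
    ← map_one (C (σ := VAll)), ← map_neg, ← map_pow, C_mul_monomial, mul_one, mul_one]

abbrev TermIndex : Type := ℕ × ℕ × ℕ × ℕ × ℕ × ℕ × ℕ

def termBox (N : ℕ) : Finset TermIndex :=
  range (N + 1) ×ˢ range (N + 1) ×ˢ range (N + 1) ×ˢ range (N + 1) ×ˢ range (N + 1) ×ˢ
    range (N + 1) ×ˢ range (N + 1)

/-- The term `(n, l, i, t, s, a, b)` of `E9 ^ κ` comes from the binomial expansions of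
`(braid + mergeP + mergeX) ^ n * (-cross) ^ (κ - n)`, `(braid + mergeP) ^ l * mergeX ^ (n - l)`
and `braid ^ i * mergeP ^ (l - i)`; `a, b, s, t` are the exponents of `p₁, x₁, π₁, ξ₁` in
`braid ^ i`, `mergeP ^ (l - i)` and `mergeX ^ (n - l)`. -/
def termExp (κ : ℕ) : TermIndex → VAll →₀ ℕ
  | (n, l, i, t, s, a, b) =>
    single p₁ a + single p₂ (i - a) + (single x₁ b + single x₂ (i - b)) +
      (single π₁ s + single π₂ (l - i - s) + single p₀ (l - i)) +
      (single ξ₁ t + single ξ₂ (n - l - t) + single x₀ (n - l)) +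
      (single ξ₁ (κ - n) + single π₂ (κ - n))

def termCoeff (κ : ℕ) : TermIndex → Kt
  | (n, l, i, t, s, a, b) =>
    (Tser - 1) ^ i * ((-1) ^ (i - a) * i.choose a) *
      ((-Tser) ^ b * (1 + Tser ^ 2) ^ (i - b) * i.choose b) * ((l - i).choose s : Kt) *
        (l.choose i : Kt) * ((n - l).choose t : Kt) * (n.choose l : Kt) * (-1) ^ (κ - n) *
          (κ.choose n : Kt)

theorem E9_pow {κ N : ℕ} (h : κ ≤ N) :
    E9 ^ κ = ∑ x ∈ termBox N, monomial (termExp κ x) (termCoeff κ x) := by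
  simp only [termBox, sum_product, termExp, termCoeff]
  rw [E9_eq, add_pow_eq_sum_range _ _ h]
  refine sum_congr rfl fun n hn => ?_
  have hn : n ≤ N := by simp at hn; omega
  rw [add_pow_eq_sum_range _ _ hn, sum_mul, sum_mul]
  refine sum_congr rfl fun l hl => ?_
  have hl : l ≤ N := by simp at hl; omega
  rw [add_pow_eq_sum_range _ _ hl, sum_mul, sum_mul, sum_mul, sum_mul]
  refine sum_congr rfl fun i hi => ?_
  have hi : i ≤ N := by simp at hi; omega
  rw [braid_pow hi, mergeP, X_add_X_mul_X_pow _ _ _ (by omega : l - i ≤ N), mergeX,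
    X_add_X_mul_X_pow _ _ _ (by omega : n - l ≤ N), neg_cross_pow]
  simp only [sum_mul, mul_sum, monomial_mul_monomial, monomial_mul_natCast]

def sliceExp (k : (Fin 2 × Bool) →₀ ℕ) (u : Bool →₀ ℕ) : VAll →₀ ℕ :=
  k.mapDomain Sum.inl + k.mapDomain (fun v => Sum.inr (Sum.inl v)) +
    u.mapDomain (fun w => Sum.inr (Sum.inr w))

@[simp] theorem sliceExp_inl (k : (Fin 2 × Bool) →₀ ℕ) (u : Bool →₀ ℕ) (v : Fin 2 × Bool) :
    sliceExp k u (Sum.inl v) = k v := by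
  simp [sliceExp, Finsupp.mapDomain_apply Sum.inl_injective, Finsupp.mapDomain_of_notMem_range]

@[simp] theorem sliceExp_inr_inl (k : (Fin 2 × Bool) →₀ ℕ) (u : Bool →₀ ℕ) (v : Fin 2 × Bool) :
    sliceExp k u (Sum.inr (Sum.inl v)) = k v := by
  have hinj : Function.Injective fun v : Fin 2 × Bool => (Sum.inr (Sum.inl v) : VAll) :=
    fun _ _ h => by simpa using h
  simp [sliceExp, Finsupp.mapDomain_apply hinj, Finsupp.mapDomain_of_notMem_range]

@[simp] theorem sliceExp_inr_inr (k : (Fin 2 × Bool) →₀ ℕ) (u : Bool →₀ ℕ) (w : Bool) :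
    sliceExp k u (Sum.inr (Sum.inr w)) = u w := by
  simp [sliceExp, Finsupp.mapDomain_of_notMem_range]

theorem sum_sliceExp (k : (Fin 2 × Bool) →₀ ℕ) (u : Bool →₀ ℕ) :
    (sliceExp k u).sum (fun _ e => e) =
      2 * (k (0, false) + k (0, true) + k (1, false) + k (1, true)) + u false + u true := by
  rw [Finsupp.sum_fintype _ _ fun _ => rfl]
  simp only [Fintype.sum_sum_type, Fintype.sum_prod_type, Fin.sum_univ_two, Fintype.sum_bool,
    sliceExp_inl, sliceExp_inr_inl, sliceExp_inr_inr]
  ring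

def Admissible (k : (Fin 2 × Bool) →₀ ℕ) (u : Bool →₀ ℕ) : Prop :=
  k (0, false) + k (1, false) = k (0, true) + k (1, true) ∧ k (0, false) ≤ u false ∧
    k (1, true) ≤ u true ∧ u false ≤ k (0, false) + k (1, false) ∧ u false = u true

instance (k : (Fin 2 × Bool) →₀ ℕ) (u : Bool →₀ ℕ) : Decidable (Admissible k u) :=
  inferInstanceAs (Decidable (_ ∧ _))

def canonicalDegree (k : (Fin 2 × Bool) →₀ ℕ) (u : Bool →₀ ℕ) : ℕ :=
  2 * (k (0, false) + k (1, false)) + u false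

def canonicalIndex (k : (Fin 2 × Bool) →₀ ℕ) (u : Bool →₀ ℕ) : TermIndex :=
  (k (0, false) + k (1, false) + u false + u true, k (0, false) + k (1, false) + u false,
    k (0, false) + k (1, false), u true - k (1, true), k (0, false), k (0, false), k (0, true))

theorem termExp_canonical {k : (Fin 2 × Bool) →₀ ℕ} {u : Bool →₀ ℕ} (hk : Admissible k u) :
    termExp (canonicalDegree k u) (canonicalIndex k u) = sliceExp k u := by
  obtain ⟨h1, h2, h3, h4, h5⟩ := hk
  ext v
  rcases v with ⟨s, b⟩ | ⟨s, b⟩ | b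
  · fin_cases s <;> cases b <;> simp [termExp, canonicalDegree, canonicalIndex]
    omega
  · fin_cases s <;> cases b <;> simp [termExp, canonicalDegree, canonicalIndex] <;> omega
  · cases b <;> simp [termExp, canonicalDegree, canonicalIndex]

theorem eq_canonical_of_termExp_eq {k : (Fin 2 × Bool) →₀ ℕ} {u : Bool →₀ ℕ} {κ : ℕ}
    {x : TermIndex} (h : termExp κ x = sliceExp k u) (hc : termCoeff κ x ≠ 0) :
    Admissible k u ∧ κ = canonicalDegree k u ∧ x = canonicalIndex k u := by
  obtain ⟨n, l, i, t, s, a, b⟩ := x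
  simp only [termCoeff, ne_eq, mul_eq_zero, Nat.cast_eq_zero, Nat.choose_eq_zero_iff, not_or,
    not_lt] at hc
  have hv (v : VAll) : termExp κ (n, l, i, t, s, a, b) v = sliceExp k u v := by rw [h]
  have e₁ := hv p₁
  have e₂ := hv p₂
  have e₃ := hv x₁
  have e₄ := hv x₂
  have e₅ := hv π₁
  have e₆ := hv π₂
  have e₇ := hv ξ₁
  have e₈ := hv ξ₂
  have e₉ := hv p₀
  have e₁₀ := hv x₀
  simp [termExp] at e₁ e₂ e₃ e₄ e₅ e₆ e₇ e₈ e₉ e₁₀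
  simp only [Admissible, canonicalDegree, canonicalIndex, Prod.mk.injEq]
  omega

theorem coeff_sliceExp_expK_E9 (k : (Fin 2 × Bool) →₀ ℕ) (u : Bool →₀ ℕ) :
    coeff (sliceExp k u) (expK E9) =
      if Admissible k u then
        ((canonicalDegree k u).factorial : ℚ)⁻¹ •
          termCoeff (canonicalDegree k u) (canonicalIndex k u)
      else 0 := by
  set M := (sliceExp k u).sum fun _ e => e
  have hexp : coeff (sliceExp k u) (expK E9) = ∑ κ ∈ range (M + 1), (κ.factorial : ℚ)⁻¹ •
      ∑ x ∈ termBox M, if sliceExp k u = termExp κ x then termCoeff κ x else 0 := by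
    rw [coeff_expK]
    refine sum_congr rfl fun κ hκ => ?_
    rw [E9_pow (Nat.lt_succ_iff.mp (mem_range.mp hκ)), map_sum]
    simp only [coeff_monomial]
  have hterm (κ : ℕ) (x : TermIndex)
      (hx : (if sliceExp k u = termExp κ x then termCoeff κ x else 0) ≠ 0) :
      Admissible k u ∧ κ = canonicalDegree k u ∧ x = canonicalIndex k u := by
    by_cases he : sliceExp k u = termExp κ x
    · rw [if_pos he] at hx
      exact eq_canonical_of_termExp_eq he.symm hx
    · exact absurd (if_neg he) hx
  rw [hexp]
  split_ifs with hk
  · have hM : M = 2 * (k (0, false) + k (0, true) + k (1, false) + k (1, true)) + u false +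
        u true := sum_sliceExp k u
    obtain ⟨h1, -, h3, h4, h5⟩ := id hk
    rw [sum_eq_single_of_mem (canonicalDegree k u) ?_ ?_,
      sum_eq_single_of_mem (canonicalIndex k u) ?_ ?_, if_pos (termExp_canonical hk).symm]
    · simp only [termBox, canonicalIndex, mem_product, mem_range]
      omega
    · exact fun x _ hx => not_not.mp fun hne => hx (hterm _ x hne).2.2
    · simp only [canonicalDegree, mem_range]
      omega
    · refine fun κ _ hκ => ?_
      rw [sum_eq_zero fun x _ => not_not.mp fun hne => hκ (hterm κ x hne).2.1, smul_zero]
  · refine sum_eq_zero fun κ _ => ?_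
    rw [sum_eq_zero fun x _ => not_not.mp fun hx => hk (hterm κ x hx).1, smul_zero]

theorem mfact_eq (k : (Fin 2 × Bool) →₀ ℕ) :
    mfact k = (k (0, false)).factorial * (k (0, true)).factorial * (k (1, false)).factorial *
      (k (1, true)).factorial := by
  rw [mfact, Finsupp.prod_fintype _ _ fun _ => rfl, Fintype.prod_prod_type, Fin.prod_univ_two,
    Fintype.prod_bool, Fintype.prod_bool]
  ring

def weight (e b d : ℕ) : Kt :=
  ((-1) ^ e * (b + d).choose e * e.choose d * (e.factorial : ℚ)⁻¹) •
    ((Tser - 1) ^ (b + d) * (-Tser) ^ b * (1 + Tser ^ 2) ^ d)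

theorem factorial_mul_termCoeff_scalar {a b c d e : ℕ} (h1 : a + c = b + d) (h2 : a ≤ e)
    (h3 : d ≤ e) (h4 : e ≤ a + c) :
    (a.factorial * b.factorial * c.factorial * d.factorial : ℚ) *
        ((2 * (a + c) + e).factorial : ℚ)⁻¹ *
        ((-1) ^ c * (a + c).choose a * (a + c).choose b * e.choose a *
          (a + c + e).choose (a + c) * e.choose (e - d) * (a + c + e + e).choose (a + c + e) *
          (-1) ^ (a + c - e) * (2 * (a + c) + e).choose (a + c + e + e)) =
      (-1) ^ a * e.choose a * ((-1) ^ e * (a + c).choose e * e.choose d * (e.factorial : ℚ)⁻¹) := by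
  have hsign : (-1 : ℚ) ^ c * (-1) ^ (a + c - e) = (-1) ^ a * (-1) ^ e :=
    neg_one_pow_mul_neg_one_pow_eq (by omega)
  rw [Nat.choose_symm h3, Nat.cast_choose ℚ (show a ≤ a + c by omega),
    Nat.cast_choose ℚ (show b ≤ a + c by omega), Nat.cast_choose ℚ h2,
    Nat.cast_choose ℚ (show a + c ≤ a + c + e by omega), Nat.cast_choose ℚ h3,
    Nat.cast_choose ℚ (show a + c + e ≤ a + c + e + e by omega),
    Nat.cast_choose ℚ (show a + c + e + e ≤ 2 * (a + c) + e by omega), Nat.cast_choose ℚ h4,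
    show a + c - a = c by omega, show a + c - b = d by omega, show a + c + e - (a + c) = e by omega,
    show a + c + e + e - (a + c + e) = e by omega,
    show 2 * (a + c) + e - (a + c + e + e) = a + c - e by omega]
  field_simp
  exact hsign

theorem mfact_smul_termCoeff_canonical {k : (Fin 2 × Bool) →₀ ℕ} {u : Bool →₀ ℕ}
    (hk : Admissible k u) :
    (mfact k : ℚ) • (((canonicalDegree k u).factorial : ℚ)⁻¹ •
        termCoeff (canonicalDegree k u) (canonicalIndex k u)) =
      ((-1) ^ k (0, false) * (u false).choose (k (0, false)) : Kt) *
        weight (u false) (k (0, true)) (k (1, true)) := by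
  obtain ⟨h1, h2, h3, h4, h5⟩ := hk
  simp only [mfact_eq, canonicalDegree, canonicalIndex, termCoeff, weight, ← h5]
  generalize k (0, false) = a at *
  generalize k (0, true) = b at *
  generalize k (1, false) = c at *
  generalize k (1, true) = d at *
  generalize u false = e at *
  have key := congrArg (algebraMap ℚ Kt) (factorial_mul_termCoeff_scalar h1 h2 (h5 ▸ h3) h4)
  simp only [map_mul, map_natCast, map_pow, map_neg, map_one] at key
  rw [show a + c - a = c by omega, show a + c - b = d by omega,
    show a + c + e - (a + c) = e by omega, show a + c + e + e - (a + c + e) = e by omega,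
    show 2 * (a + c) + e - (a + c + e + e) = a + c - e by omega, ← h1]
  simp only [Algebra.smul_def, map_mul, map_natCast, map_pow, map_neg, map_one, Nat.cast_mul]
  linear_combination ((Tser - 1) ^ (a + c) * (-Tser) ^ b * (1 + Tser ^ 2) ^ d) * key

def contractionTerm (k : (Fin 2 × Bool) →₀ ℕ) (u : Bool →₀ ℕ) : Kt :=
  ((mfact k : ℚ) • sliceC k (expK E9)) u

theorem contractionTerm_eq (k : (Fin 2 × Bool) →₀ ℕ) (u : Bool →₀ ℕ) :
    contractionTerm k u = if Admissible k u then
      ((-1) ^ k (0, false) * (u false).choose (k (0, false)) : Kt) *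
        weight (u false) (k (0, true)) (k (1, true)) else 0 := by
  change (mfact k : ℚ) • coeff (sliceExp k u) (expK E9) = _
  rw [coeff_sliceExp_expK_E9]
  split_ifs with hk
  · exact mfact_smul_termCoeff_canonical hk
  · exact smul_zero _

/-- Admissible `k` with exponents `(a, b, d)` of `p₁, x₁, x₂`; the exponent `b + d - a` of `p₂`
is truncated, which is harmless since admissibility forces `a ≤ b + d`. -/
def kOf (a b d : ℕ) : (Fin 2 × Bool) →₀ ℕ :=
  single (0, false) a + single (0, true) b + single (1, false) (b + d - a) + single (1, true) d

@[simp] theorem kOf_apply (a b d : ℕ) :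
    kOf a b d (0, false) = a ∧ kOf a b d (0, true) = b ∧ kOf a b d (1, false) = b + d - a ∧
      kOf a b d (1, true) = d := by
  simp [kOf]

theorem kOf_injective : Function.Injective fun p : ℕ × ℕ × ℕ => kOf p.1 p.2.1 p.2.2 := by
  rintro ⟨a, b, d⟩ ⟨a', b', d'⟩ h
  have h₁ := DFunLike.congr_fun h (0, false)
  have h₂ := DFunLike.congr_fun h (0, true)
  have h₄ := DFunLike.congr_fun h (1, true)
  simp only [kOf_apply] at h₁ h₂ h₄
  rw [h₁, h₂, h₄]

theorem eq_kOf_of_admissible {k : (Fin 2 × Bool) →₀ ℕ} {u : Bool →₀ ℕ} (hk : Admissible k u) :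
    k = kOf (k (0, false)) (k (0, true)) (k (1, true)) := by
  obtain ⟨h1, -⟩ := hk
  ext ⟨s, b⟩
  fin_cases s <;> cases b <;> simp
  omega

def admissibleWeight (e : ℕ) (p : ℕ × ℕ) : Kt :=
  if p.2 ≤ e ∧ e ≤ p.1 + p.2 then weight e p.1 p.2 else 0

theorem contractionTerm_kOf {u : Bool →₀ ℕ} (hu : u false = u true) (a b d : ℕ) :
    contractionTerm (kOf a b d) u =
      ((-1) ^ a * (u false).choose a : Kt) * admissibleWeight (u false) (b, d) := by
  rw [contractionTerm_eq, admissibleWeight]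
  simp only [Admissible, kOf_apply, ← hu, and_true]
  by_cases ha : a ≤ u false
  · by_cases hbd : d ≤ u false ∧ u false ≤ b + d
    · rw [if_pos (by omega), if_pos hbd]
    · rw [if_neg (by omega), if_neg hbd, mul_zero]
  · rw [Nat.choose_eq_zero_of_lt (not_le.mp ha), if_neg (by omega)]
    simp

theorem constantCoeff_Tser : PowerSeries.constantCoeff Tser = 1 := by
  simp [Tser]

theorem X_dvd_Tser_sub_one : (PowerSeries.X : Kt) ∣ Tser - 1 := by
  rw [PowerSeries.X_dvd_iff, map_sub, constantCoeff_Tser, map_one, sub_self]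

section Topology

open scoped PowerSeries.WithPiTopology
open PowerSeries.WithPiTopology

variable [TopologicalSpace ℚ]

theorem summable_admissibleWeight (e : ℕ) : Summable (admissibleWeight e) := by
  refine summable_of_X_pow_dvd (fun p => p.1 + p.2)
    (fun N => ((Set.finite_Iic N).prod (Set.finite_Iic N)).subset
      fun p (hp : p.1 + p.2 ≤ N) => ⟨by simp; omega, by simp; omega⟩) fun p => ?_
  rw [admissibleWeight]
  split_ifs
  · rw [weight, Algebra.smul_def]
    exact dvd_mul_of_dvd_right (dvd_mul_of_dvd_left (dvd_mul_of_dvd_left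
      (pow_dvd_pow_of_dvd X_dvd_Tser_sub_one _) _) _) _
  · exact dvd_zero _

-- With `ℚ` discrete, the scoped topology `PowerSeries.WithPiTopology` on `Kt` is `KtTop`.
variable [DiscreteTopology ℚ]

theorem hasSum_admissibleWeight_zero :
    HasSum (admissibleWeight 0) (1 - Tser + Tser ^ 2)⁻¹ := by
  have hinj : Function.Injective fun b : ℕ => (b, 0) := fun _ _ h => (Prod.mk.inj h).1
  refine (hinj.hasSum_iff fun p hp => ?_).mp ?_
  · rw [admissibleWeight, if_neg]
    rintro ⟨hd, -⟩
    exact hp ⟨p.1, by ext <;> simp; omega⟩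
  · convert hasSum_pow_of_constantCoeff_eq_zero (q := Tser - Tser ^ 2)
      (by simp [constantCoeff_Tser]) using 1
    · funext b
      simp only [Function.comp_apply, admissibleWeight, weight, le_refl, zero_le, and_self,
        if_true, pow_zero, Nat.choose_zero_right, Nat.choose_self, Nat.factorial_zero,
        Nat.cast_one, inv_one, mul_one, one_smul, add_zero, ← mul_pow]
      ring
    · congr 1
      ring

theorem hasSum_contractionTerm_of_eq {u : Bool →₀ ℕ} (hu : u false = u true) {S : Kt}
    (hS : HasSum (admissibleWeight (u false)) S) :
    HasSum (fun k => contractionTerm k u) (if u false = 0 then S else 0) := by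
  have hprod := hS.mul_of_finite_support_left
    (c := fun a => ((-1) ^ a * (u false).choose a : Kt)) (range (u false + 1)) fun a ha => by
      rw [Nat.choose_eq_zero_of_lt (by simpa using ha), Nat.cast_zero, mul_zero]
  rw [sum_range_neg_one_pow_mul_choose, ite_mul, one_mul, zero_mul] at hprod
  refine (kOf_injective.hasSum_iff fun k hk => ?_).mp ?_
  · rw [contractionTerm_eq, if_neg]
    exact fun hA => hk ⟨(k (0, false), k (0, true), k (1, true)), (eq_kOf_of_admissible hA).symm⟩
  · have hfun : ((fun k => contractionTerm k u) ∘ fun p : ℕ × ℕ × ℕ => kOf p.1 p.2.1 p.2.2) =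
        fun p => ((-1) ^ p.1 * (u false).choose p.1 : Kt) * admissibleWeight (u false) p.2 :=
      funext fun p => contractionTerm_kOf hu p.1 p.2.1 p.2.2
    rwa [hfun]

theorem hasSum_contractionTerm (u : Bool →₀ ℕ) :
    HasSum (fun k => contractionTerm k u) (if u = 0 then (1 - Tser + Tser ^ 2)⁻¹ else 0) := by
  by_cases hu : u false = u true
  · have hu0 : u = 0 ↔ u false = 0 :=
      ⟨fun h => by simp [h], fun h => Finsupp.ext fun b => by cases b; exacts [h, hu ▸ h]⟩
    by_cases he : u false = 0
    · have h := hasSum_contractionTerm_of_eq hu (S := (1 - Tser + Tser ^ 2)⁻¹)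
        (by rw [he]; exact hasSum_admissibleWeight_zero)
      rw [if_pos (hu0.mpr he)]
      rwa [if_pos he] at h
    · have h := hasSum_contractionTerm_of_eq hu (summable_admissibleWeight _).hasSum
      rw [if_neg (mt hu0.mp he)]
      rwa [if_neg he] at h
  · have hzero (k : (Fin 2 × Bool) →₀ ℕ) : contractionTerm k u = 0 := by
      rw [contractionTerm_eq, if_neg fun hA => hu hA.2.2.2.2]
    rw [if_neg (by rintro rfl; exact hu rfl)]
    simp [hzero, hasSum_zero]

end Topology

end Trefoil

/-- The universal Heisenberg-algebra invariant of the (long) positive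
trefoil equals the reciprocal of its Alexander polynomial: the contraction
`⟨e^{(T-1)(p_i-p_j)(-T x_i + (1+T²)x_j)} · e^{(π_i+π_j)p_0+(ξ_i+ξ_j)x_0-ξ_iπ_j}⟩`
over the pairs indexed by `i` and `j` converges to the constant `1/(1-T+T²)`. -/
theorem trefoil_heisenberg_invariant :
    letI : TopologicalSpace (MvPowerSeries Bool Kt) := outTop
    HasSum (fun k : (Fin 2 × Bool) →₀ ℕ => (mfact k : ℚ) • sliceC k (expK E9))
      (MvPowerSeries.C (σ := Bool) (R := Kt) ((1 - Tser + Tser ^ 2)⁻¹)) := by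
  let _ : TopologicalSpace ℚ := ⊥
  have _ : DiscreteTopology ℚ := ⟨rfl⟩
  let _ : TopologicalSpace Kt := KtTop
  refine Pi.hasSum.mpr fun u => ?_
  rw [show MvPowerSeries.C (σ := Bool) (R := Kt) (1 - Tser + Tser ^ 2)⁻¹ u =
    if u = 0 then (1 - Tser + Tser ^ 2)⁻¹ else 0 from MvPowerSeries.coeff_C u _]
  exact Trefoil.hasSum_contractionTerm u
end
end

section
/- In the q-exponential identity, writing log(e_q^z) - z = Σ_{n≥2} (1-q)^n z^n / ((1-q^n) n) with q = e^{εℏ}, each coefficient of ε^k in the expansion of exp(Σ_{n≥2} (1-q)^n z^n/((1-q^n)n)) is a polynomial in z and ℏ whose z-degree is at most 2k; in particular the coefficient of ε^0 is 1. -/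
noncomputable section

/-- The ring `ℚ[[ε, ℏ, z]]` (variables `0 = ε`, `1 = ℏ`, `2 = z`). -/
abbrev R3 : Type := MvPowerSeries (Fin 3) ℚ

/-- The truncated exponential `exp E = Σ_k E^k/k!`, valid for `E` with zero constant
term (only `k ≤ |m|` contributes to the coefficient at a multi-index `m`). -/
def expR (E : R3) : R3 :=
  fun m => ∑ k ∈ Finset.range (m.sum (fun _ e => e) + 1),
    ((k.factorial : ℚ)⁻¹) • MvPowerSeries.coeff (R := ℚ) m (E ^ k)

/-- `D = (1 - e^{εℏ})/(εℏ) = -Σ_{k≥0} (εℏ)^k/(k+1)!`. -/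
def Dser : R3 :=
  fun m => if m 2 = 0 ∧ m 0 = m 1 then -(1 : ℚ) / ((m 0 + 1).factorial : ℚ) else 0

/-- `E_n = (1 - e^{nεℏ})/(εℏ) = -Σ_{k≥0} n^{k+1}(εℏ)^k/(k+1)!`; its constant term is
`-n`, so it is invertible for `n ≥ 1`. -/
def Eser (n : ℕ) : R3 :=
  fun m => if m 2 = 0 ∧ m 0 = m 1 then -((n : ℚ) ^ (m 0 + 1)) / ((m 0 + 1).factorial : ℚ)
    else 0

/-- `c_n = (1-q)^n/((1-q^n)·n) = D^n · (εℏ)^{n-1} · E_n⁻¹ · n⁻¹` with `q = e^{εℏ}`. -/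
def cSer (n : ℕ) : R3 :=
  Dser ^ n * (MvPowerSeries.X 0 * MvPowerSeries.X 1) ^ (n - 1) * (Eser n)⁻¹ *
    MvPowerSeries.C (σ := Fin 3) (R := ℚ) ((n : ℚ)⁻¹)

/-- `S = Σ_{n≥2} c_n z^n = Σ_{n≥2} (1-q)^n z^n/((1-q^n)n)`; the coefficient of a
multi-index `m` only receives a contribution from `n = m(z)`. -/
def Sser : R3 :=
  fun m => if 2 ≤ m 2 then
    MvPowerSeries.coeff (R := ℚ) m (cSer (m 2) * MvPowerSeries.X 2 ^ (m 2)) else 0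

/-- A multi-index `ε^k ℏ^i z^j`. -/
def idx3 (k i j : ℕ) : Fin 3 →₀ ℕ :=
  Finsupp.single 0 k + Finsupp.single 1 i + Finsupp.single 2 j

/-! Every series entering `S` lives in the submonoid of exponents spanned by `εℏ`, except for the
explicit factor `(εℏ)^{n-1} z^n` of `c_n z^n`; since `n ≥ 2`, its exponent satisfies
`z-degree ≤ 2 · ε-degree` and `ε-degree = ℏ-degree`. These two conditions cut out an additive
submonoid of exponents, and series supported in a submonoid form a subsemiring, closed under
inversion over a field; so they hold for every monomial of `exp S`. At ε-degree `0` they leave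
only the monomial `1`. -/

namespace MvPowerSeries

variable {σ R : Type*} [Semiring R]

theorem exists_add_eq_of_coeff_mul_ne_zero {f g : MvPowerSeries σ R}
    {m : σ →₀ ℕ} (h : coeff m (f * g) ≠ 0) :
    ∃ a b, a + b = m ∧ coeff a f ≠ 0 ∧ coeff b g ≠ 0 := by
  classical
  rw [coeff_mul] at h
  obtain ⟨p, hp, hne⟩ := Finset.exists_ne_zero_of_sum_ne_zero h
  exact ⟨p.1, p.2, Finset.HasAntidiagonal.mem_antidiagonal.mp hp, left_ne_zero_of_mul hne,
    right_ne_zero_of_mul hne⟩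

theorem eq_zero_of_coeff_one_ne_zero {m : σ →₀ ℕ}
    (h : coeff m (1 : MvPowerSeries σ R) ≠ 0) : m = 0 := by
  classical
  rw [coeff_one] at h
  exact not_not.mp fun hm => h (if_neg hm)

def supportedIn (M : AddSubmonoid (σ →₀ ℕ)) : Subsemiring (MvPowerSeries σ R) where
  carrier := {f | ∀ m, coeff m f ≠ 0 → m ∈ M}
  zero_mem' m h := absurd (map_zero _) h
  one_mem' m h := eq_zero_of_coeff_one_ne_zero h ▸ M.zero_mem
  add_mem' {f g} hf hg m h := by
    rw [map_add] at h
    by_cases hfm : coeff m f = 0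
    · exact hg m (by simpa [hfm] using h)
    · exact hf m hfm
  mul_mem' {f g} hf hg m h := by
    obtain ⟨a, b, rfl, ha, hb⟩ := exists_add_eq_of_coeff_mul_ne_zero h
    exact M.add_mem (hf a ha) (hg b hb)

theorem supportedIn_mono {M N : AddSubmonoid (σ →₀ ℕ)} (hMN : M ≤ N) :
    supportedIn (R := R) M ≤ supportedIn N :=
  fun _ hf m h => hMN (hf m h)

theorem monomial_mem_supportedIn {M : AddSubmonoid (σ →₀ ℕ)} {e : σ →₀ ℕ}
    (he : e ∈ M) (a : R) : monomial e a ∈ supportedIn M := by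
  classical
  intro m h
  rw [coeff_monomial] at h
  split_ifs at h with hme
  · exact hme ▸ he
  · exact absurd rfl h

theorem C_mem_supportedIn (M : AddSubmonoid (σ →₀ ℕ)) (a : R) :
    C a ∈ supportedIn M :=
  monomial_mem_supportedIn M.zero_mem a

-- `coeff m f⁻¹` is a combination of products `coeff a f * coeff b f⁻¹` with `a + b = m`, `b < m`.
theorem inv_mem_supportedIn {k : Type*} [Field k] {M : AddSubmonoid (σ →₀ ℕ)}
    {f : MvPowerSeries σ k} (hf : f ∈ supportedIn M) : f⁻¹ ∈ supportedIn M := by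
  classical
  intro m
  induction m using WellFoundedLT.induction with
  | _ m ih =>
    intro h
    rcases eq_or_ne m 0 with rfl | hm0
    · exact M.zero_mem
    rw [coeff_inv, if_neg hm0] at h
    obtain ⟨p, hp, hne⟩ := Finset.exists_ne_zero_of_sum_ne_zero (right_ne_zero_of_mul h)
    have hlt : p.2 < m := by by_contra hlt; exact hne (if_neg hlt)
    rw [if_pos hlt] at hne
    rw [← Finset.HasAntidiagonal.mem_antidiagonal.mp hp]
    exact M.add_mem (hf _ (left_ne_zero_of_mul hne)) (ih _ hlt (right_ne_zero_of_mul hne))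

end MvPowerSeries

open MvPowerSeries

theorem expR_mem_supportedIn {M : AddSubmonoid (Fin 3 →₀ ℕ)} {E : R3}
    (hE : E ∈ supportedIn M) : expR E ∈ supportedIn M := by
  intro m h
  rw [coeff_apply, expR] at h
  obtain ⟨k, -, hk⟩ := Finset.exists_ne_zero_of_sum_ne_zero h
  exact pow_mem hE k m (right_ne_zero_of_smul hk)

theorem coeff_zero_expR (E : R3) : coeff 0 (expR E) = 1 := by
  rw [coeff_apply, expR]
  simp

def epsHbarPowers : AddSubmonoid (Fin 3 →₀ ℕ) where
  carrier := {m | m 2 = 0 ∧ m 0 = m 1}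
  zero_mem' := ⟨rfl, rfl⟩
  add_mem' := by
    rintro a b ⟨ha2, ha⟩ ⟨hb2, hb⟩
    simp only [Set.mem_ofPred_eq, Finsupp.add_apply]
    omega

def zDegreeBounded : AddSubmonoid (Fin 3 →₀ ℕ) where
  carrier := {m | m 0 = m 1 ∧ m 2 ≤ 2 * m 0}
  zero_mem' := ⟨rfl, le_rfl⟩
  add_mem' := by
    rintro a b ⟨ha, ha2⟩ ⟨hb, hb2⟩
    simp only [Set.mem_ofPred_eq, Finsupp.add_apply]
    omega

theorem epsHbarPowers_le_zDegreeBounded : epsHbarPowers ≤ zDegreeBounded := by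
  rintro m ⟨h2, h01⟩
  exact ⟨h01, by omega⟩

@[simp]
theorem idx3_mem_zDegreeBounded_iff {k i j : ℕ} :
    idx3 k i j ∈ zDegreeBounded ↔ i = k ∧ j ≤ 2 * k := by
  simp [zDegreeBounded, idx3, eq_comm]

theorem Dser_mem_supportedIn : Dser ∈ supportedIn epsHbarPowers := by
  intro m h
  by_contra hm
  exact h (if_neg hm)

theorem Eser_mem_supportedIn (n : ℕ) : Eser n ∈ supportedIn epsHbarPowers := by
  intro m h
  by_contra hm
  exact h (if_neg hm)

theorem cSer_mul_X_pow (n : ℕ) :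
    cSer n * X 2 ^ n = monomial (idx3 (n - 1) (n - 1) n) 1 *
      (Dser ^ n * (Eser n)⁻¹ * C ((n : ℚ)⁻¹)) := by
  have hmono : (X 0 * X 1 : R3) ^ (n - 1) * X 2 ^ n = monomial (idx3 (n - 1) (n - 1) n) 1 := by
    simp only [mul_pow, X_pow_eq, monomial_mul_monomial, mul_one, idx3]
  rw [← hmono, cSer]
  ring

theorem cSer_mul_X_pow_mem_supportedIn {n : ℕ} (hn : 2 ≤ n) :
    cSer n * X 2 ^ n ∈ supportedIn zDegreeBounded := by
  rw [cSer_mul_X_pow]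
  refine mul_mem (monomial_mem_supportedIn (idx3_mem_zDegreeBounded_iff.mpr ⟨rfl, by omega⟩) _)
    (supportedIn_mono epsHbarPowers_le_zDegreeBounded ?_)
  exact mul_mem (mul_mem (pow_mem Dser_mem_supportedIn n)
    (inv_mem_supportedIn (Eser_mem_supportedIn n))) (C_mem_supportedIn _ _)

theorem Sser_mem_supportedIn : Sser ∈ supportedIn zDegreeBounded := by
  intro m h
  rw [coeff_apply, Sser] at h
  split_ifs at h with hm
  · exact cSer_mul_X_pow_mem_supportedIn hm m h
  · exact absurd rfl h

/-- Writing `log(e_q^z) - z = Σ_{n≥2} (1-q)^n z^n/((1-q^n)n)` with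
`q = e^{εℏ}`, in `F = exp(Σ_{n≥2} (1-q)^n z^n/((1-q^n)n))` the coefficient of `ε^k`
is a polynomial in `z` and `ℏ` (only finitely many `(ℏ,z)`-monomials occur) whose
`z`-degree is at most `2k`; the coefficient of `ε^0` is `1`. -/
theorem faddeev_perturbation_degree :
    (∀ k : ℕ,
        {p : ℕ × ℕ | MvPowerSeries.coeff (R := ℚ) (idx3 k p.1 p.2) (expR Sser) ≠ 0}.Finite ∧
        ∀ i j : ℕ, MvPowerSeries.coeff (R := ℚ) (idx3 k i j) (expR Sser) ≠ 0 → j ≤ 2 * k) ∧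
      ∀ i j : ℕ, MvPowerSeries.coeff (R := ℚ) (idx3 0 i j) (expR Sser) =
        if i = 0 ∧ j = 0 then 1 else 0 := by
  have hsupp (k i j : ℕ) (h : coeff (idx3 k i j) (expR Sser) ≠ 0) : i = k ∧ j ≤ 2 * k :=
    idx3_mem_zDegreeBounded_iff.mp (expR_mem_supportedIn Sser_mem_supportedIn _ h)
  refine ⟨fun k => ⟨?_, fun i j h => (hsupp k i j h).2⟩, fun i j => ?_⟩
  · refine ((Set.finite_singleton k).prod (Set.finite_Iic (2 * k))).subset fun p hp => ?_
    exact hsupp k p.1 p.2 hp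
  · split_ifs with h
    · obtain ⟨rfl, rfl⟩ := h
      simpa [idx3] using coeff_zero_expR Sser
    · by_contra hne
      obtain ⟨hi, hj⟩ := hsupp 0 i j hne
      exact h ⟨hi, by omega⟩
end
end

section
/- In the quantum double algebra D, the element w = y A^{-1} x + (q A^{-1} + A T - ½(1+T)(q+1)) / (ℏ(q-1)) is central, where A = e^{-εℏa}, T = e^{-ℏ(b - εa)}, q = e^{εℏ}. In particular x·(y A^{-1} x + (qA^{-1}+AT)/(ℏ(q-1))) = (y A^{-1} x + (qA^{-1}+AT)/(ℏ(q-1)))·x. -/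
/-- In the quantum double algebra `D`, the element
`w = y A⁻¹ x + (q A⁻¹ + A T - ½(1+T)(q+1)) / (ℏ(q-1))` is central, where
`A = e^{-εℏa}`, `T = e^{-ℏ(b-εa)}` (central), `q = e^{εℏ}`.  We work abstractly with
elements `d`, `z` satisfying `ℏ(q-1)·d = q A⁻¹ + A T` and `ℏ(q-1)·(2z) = (1+T)(q+1)`
(with `z` central), so that `w = y A⁻¹ x + d - z`; the relations of `D` that are used
are listed as hypotheses, together with regularity of `ℏ(q-1)` (true in `D`).
Conclusion: `w` commutes with `x`, `y` and `a`; in particular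
`x·(y A⁻¹ x + (qA⁻¹+AT)/(ℏ(q-1))) = (y A⁻¹ x + (qA⁻¹+AT)/(ℏ(q-1)))·x`. -/
theorem quantum_double_w_central {D : Type*} [Ring D]
    (ℏ q qinv A Ainv T y a x c d z : D)
    -- scalars are central
    (hℏc : ∀ r : D, Commute ℏ r) (hqc : ∀ r : D, Commute q r)
    (hqinvc : ∀ r : D, Commute qinv r) (hTc : ∀ r : D, Commute T r)
    (hzc : ∀ r : D, Commute z r)
    -- invertibility of q and A
    (hq1 : q * qinv = 1) (hA : A * Ainv = 1) (hA' : Ainv * A = 1)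
    -- commutation of A with the generators (consequences of `[a,x] = x`, `[a,y] = -y`)
    (hxA : x * A = q * (A * x)) (hxAinv : x * Ainv = qinv * (Ainv * x))
    (hAy : A * y = q * (y * A)) (hyAinv : y * Ainv = q * (Ainv * y))
    (hAa : Commute A a) (hAinva : Commute Ainv a)
    -- the main relation `x y = q y x + (1 - AB)/ℏ` with `B = T A`, so `A B = A² T`
    (hxy : x * y = q * (y * x) + c) (hc : ℏ * c = 1 - A * A * T)
    -- commutators with `a`
    (hax : a * x - x * a = x) (hay : a * y - y * a = -y)
    -- the elements `d` and `z`
    (hd : ℏ * (q - 1) * d = q * Ainv + A * T)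
    (hz : ℏ * (q - 1) * (2 * z) = (1 + T) * (q + 1))
    -- `ℏ(q-1)` is regular in `D`
    (hreg : ∀ u v : D, ℏ * (q - 1) * u = ℏ * (q - 1) * v → u = v) :
    Commute (y * Ainv * x + d - z) x ∧
      Commute (y * Ainv * x + d - z) y ∧
      Commute (y * Ainv * x + d - z) a ∧
      x * (y * Ainv * x + d) = (y * Ainv * x + d) * x := by
  have hq1' : qinv * q = 1 := by rw [(hqinvc q).eq, hq1]
  have hℏ : ∀ r : D, ℏ * r = r * ℏ := fun r => (hℏc r).eq
  have hq : ∀ r : D, q * r = r * q := fun r => (hqc r).eq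
  have hqi : ∀ r : D, qinv * r = r * qinv := fun r => (hqinvc r).eq
  have hqm : ∀ r : D, (q - 1) * r = r * (q - 1) := fun r =>
    ((hqc r).sub_left (Commute.one_left r)).eq
  have swap : ∀ u : D, (∀ r : D, u * r = r * u) → ∀ m k : D, u * (m * k) = m * (u * k) :=
    fun u hu m k => by rw [← mul_assoc, hu m, mul_assoc]
  set s := ℏ * (q - 1) with hs
  have hsc : ∀ r : D, s * r = r * s := fun r =>
    ((hℏc r).mul_left (((hqc r).sub_left (Commute.one_left r)))).eq
  have hAinvy : Ainv * y = qinv * (y * Ainv) := by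
    have h : qinv * (y * Ainv) = qinv * (q * (Ainv * y)) := by rw [hyAinv]
    rw [h, ← mul_assoc, hq1', one_mul]
  have hx3 : A * A * T * Ainv = A * T := by
    rw [mul_assoc (A*A) T Ainv, (hTc Ainv).eq, ← mul_assoc (A*A) Ainv T,
        mul_assoc A A Ainv, hA, mul_one]
  have hy3 : Ainv * (A * A * T) = A * T := by
    rw [← mul_assoc Ainv (A*A) T, ← mul_assoc Ainv A A, hA', one_mul]
  -- key commutation of d with x
  have hdx : d * x = x * d + c * (Ainv * x) := by
    apply hreg
    have h1 : s * (d * x) = (q * Ainv + A * T) * x := by rw [← mul_assoc, hd]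
    have h2 : s * (x * d) = x * (q * Ainv + A * T) := by
      rw [← mul_assoc, hsc x, mul_assoc, hd]
    have h3 : s * (c * (Ainv * x)) = (q - 1) * ((1 - A * A * T) * (Ainv * x)) := by
      rw [hs, mul_assoc ℏ (q-1) (c*(Ainv*x)), swap ℏ hℏ (q-1) (c*(Ainv*x)),
          ← mul_assoc ℏ c (Ainv*x), hc]
    rw [mul_add, h1, h2, h3]
    have hx1 : x * (q * Ainv) = Ainv * x := by
      rw [← mul_assoc x q Ainv, ← hq x, mul_assoc q x Ainv, hxAinv,
          ← mul_assoc q qinv (Ainv*x), hq1, one_mul]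
    have hx2 : x * (A * T) = q * (A * T * x) := by
      rw [← mul_assoc x A T, hxA, mul_assoc q (A*x) T, mul_assoc A x T,
          ← (hTc x).eq, ← mul_assoc A T x]
    have e : (1 - A * A * T) * (Ainv * x) = Ainv * x - A * T * x := by
      rw [sub_mul, one_mul, ← mul_assoc (A*A*T) Ainv x, hx3]
    rw [add_mul, mul_add x (q*Ainv) (A*T), hx1, hx2, e]
    noncomm_ring
  -- key commutation of d with y
  have hdy : y * d = d * y + y * (Ainv * c) := by
    apply hreg
    have h1 : s * (y * d) = y * (q * Ainv + A * T) := by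
      rw [← mul_assoc, hsc y, mul_assoc, hd]
    have h2 : s * (d * y) = (q * Ainv + A * T) * y := by rw [← mul_assoc, hd]
    have h3 : s * (y * (Ainv * c)) = y * (Ainv * ((q - 1) * (1 - A * A * T))) := by
      rw [hs, mul_assoc ℏ (q-1) (y*(Ainv*c)), swap (q-1) hqm y (Ainv*c),
          swap (q-1) hqm Ainv c, swap ℏ hℏ y (Ainv*((q-1)*c)),
          swap ℏ hℏ Ainv ((q-1)*c), swap ℏ hℏ (q-1) c, hc]
    rw [mul_add, h1, h2, h3]
    have hy1 : (q * Ainv) * y = y * Ainv := by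
      rw [mul_assoc q Ainv y, hAinvy, ← mul_assoc q qinv (y*Ainv), hq1, one_mul]
    have hy2 : (A * T) * y = q * (y * (A * T)) := by
      rw [mul_assoc A T y, (hTc y).eq, ← mul_assoc A y T, hAy,
          mul_assoc q (y*A) T, mul_assoc y A T]
    have e2 : y * (Ainv * ((q - 1) * (1 - A * A * T)))
        = (q - 1) * (y * Ainv) - (q - 1) * (y * (A * T)) := by
      rw [← swap (q-1) hqm Ainv (1 - A*A*T), ← swap (q-1) hqm y (Ainv*(1 - A*A*T)),
          mul_sub Ainv 1 (A*A*T), mul_one, hy3, mul_sub y Ainv (A*T), mul_sub]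
    rw [mul_add y (q*Ainv) (A*T), add_mul, hy1, hy2, e2, ← swap q hq y Ainv]
    noncomm_ring
  -- d commutes with a
  have hda : d * a = a * d := by
    apply hreg
    have h1 : s * (d * a) = (q * Ainv + A * T) * a := by rw [← mul_assoc, hd]
    have h2 : s * (a * d) = a * (q * Ainv + A * T) := by
      rw [← mul_assoc, hsc a, mul_assoc, hd]
    rw [h1, h2, add_mul, mul_add]
    congr 1
    · rw [mul_assoc q Ainv a, hAinva.eq, ← mul_assoc q a Ainv, hq a, mul_assoc a q Ainv]
    · rw [mul_assoc A T a, (hTc a).eq, ← mul_assoc A a T, hAa.eq, mul_assoc a A T]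
  -- commutation of x with w0 = y*Ainv*x
  have hxw0 : x * (y * Ainv * x) = (y * Ainv * x) * x + c * (Ainv * x) := by
    calc x * (y * Ainv * x) = (x * y) * (Ainv * x) := by noncomm_ring
      _ = (q * (y * x)) * (Ainv * x) + c * (Ainv * x) := by rw [hxy, add_mul]
      _ = q * (y * ((x * Ainv) * x)) + c * (Ainv * x) := by noncomm_ring
      _ = q * (y * ((qinv * (Ainv * x)) * x)) + c * (Ainv * x) := by rw [hxAinv]
      _ = q * (y * (qinv * ((Ainv * x) * x))) + c * (Ainv * x) := by
          rw [mul_assoc qinv (Ainv*x) x]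
      _ = (q * qinv) * (y * ((Ainv * x) * x)) + c * (Ainv * x) := by
          rw [← swap qinv hqi y ((Ainv*x)*x), ← mul_assoc q qinv (y*((Ainv*x)*x))]
      _ = (y * Ainv * x) * x + c * (Ainv * x) := by rw [hq1, one_mul]; noncomm_ring
  -- commutation of y with w0
  have hyw0 : (y * Ainv * x) * y = y * (y * Ainv * x) + y * (Ainv * c) := by
    calc (y * Ainv * x) * y = (y * Ainv) * (x * y) := by noncomm_ring
      _ = (y * Ainv) * (q * (y * x)) + y * (Ainv * c) := by
          rw [hxy, mul_add]; noncomm_ring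
      _ = q * (y * ((Ainv * y) * x)) + y * (Ainv * c) := by
          rw [← swap q hq (y*Ainv) (y*x)]; noncomm_ring
      _ = q * (y * ((qinv * (y * Ainv)) * x)) + y * (Ainv * c) := by rw [hAinvy]
      _ = q * (y * (qinv * ((y * Ainv) * x))) + y * (Ainv * c) := by
          rw [mul_assoc qinv (y*Ainv) x]
      _ = (q * qinv) * (y * ((y * Ainv) * x)) + y * (Ainv * c) := by
          rw [← swap qinv hqi y ((y*Ainv)*x), ← mul_assoc q qinv (y*((y*Ainv)*x))]
      _ = y * (y * Ainv * x) + y * (Ainv * c) := by rw [hq1, one_mul]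
  -- commutation of a with w0
  have haw0 : a * (y * Ainv * x) = (y * Ainv * x) * a := by
    have hay' : a * y = y * a - y := by
      have h := hay; rw [sub_eq_iff_eq_add] at h; rw [h]; abel
    have hax' : a * x = x * a + x := by
      have h := hax; rw [sub_eq_iff_eq_add] at h; rw [h]; abel
    calc a * (y * Ainv * x) = (a * y) * (Ainv * x) := by noncomm_ring
      _ = (y * a - y) * (Ainv * x) := by rw [hay']
      _ = (y * (a * Ainv)) * x - (y * Ainv) * x := by noncomm_ring
      _ = (y * (Ainv * a)) * x - (y * Ainv) * x := by rw [← hAinva.eq]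
      _ = (y * Ainv) * (a * x) - (y * Ainv) * x := by noncomm_ring
      _ = (y * Ainv) * (x * a + x) - (y * Ainv) * x := by rw [hax']
      _ = (y * Ainv * x) * a := by noncomm_ring
  refine ⟨?_, ?_, ?_, ?_⟩
  · show (y * Ainv * x + d - z) * x = x * (y * Ainv * x + d - z)
    rw [sub_mul, add_mul, mul_sub, mul_add, hxw0, hdx, (hzc x).eq]
    noncomm_ring
  · show (y * Ainv * x + d - z) * y = y * (y * Ainv * x + d - z)
    rw [sub_mul, add_mul, mul_sub, mul_add, hyw0, hdy, (hzc y).eq]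
    noncomm_ring
  · show (y * Ainv * x + d - z) * a = a * (y * Ainv * x + d - z)
    rw [sub_mul, add_mul, mul_sub, mul_add, haw0, hda, (hzc a).eq]
  · rw [mul_add, add_mul, hxw0, hdx]
    noncomm_ring
end
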